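/- Let k be an arbitrary field, B = B'⊕B'' and C = C'⊕C''. Suppose W'' ⊆ B''⊗C'' is a (1,1)-hook shaped subspace and W' ⊆ B'⊗C' is an arbitrary subspace. Then the additivity of the rank holds for W'⊕W'': R(W'⊕W'') = R(W') + R(W''). -/

import Mathlib

open TensorProduct Module

noncomputable section

variable (k : Type*) [Field k]

/-- The rank of a linear subspace `W ⊆ B⊗C`: the minimal number `r` of rank-one
tensors whose span contains `W`. -/
def sRank {B C : Type*} [AddCommGroup B] [Module k B]
    [AddCommGroup C] [Module k C] (W : Submodule k (B ⊗[k] C)) : ℕ :=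
  sInf {r : ℕ | ∃ (b : Fin r → B) (c : Fin r → C),
    W ≤ Submodule.span k (Set.range fun i => b i ⊗ₜ[k] c i)}

/-- A subspace `W ⊆ B⊗C` is `(e,f)`-hook shaped if `W ⊆ B₁⊗C + B⊗C₁` for some subspaces
`B₁ ⊆ B` of dimension `e` and `C₁ ⊆ C` of dimension `f`. -/
def IsHookShaped (e f : ℕ) {B C : Type*} [AddCommGroup B] [Module k B]
    [AddCommGroup C] [Module k C] (W : Submodule k (B ⊗[k] C)) : Prop :=
  ∃ (B₁ : Submodule k B) (C₁ : Submodule k C), finrank k B₁ = e ∧ finrank k C₁ = f ∧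
    W ≤ LinearMap.range (TensorProduct.map B₁.subtype (LinearMap.id : C →ₗ[k] C)) ⊔
        LinearMap.range (TensorProduct.map (LinearMap.id : B →ₗ[k] B) C₁.subtype)

variable (B' B'' C' C'' : Type*)
  [AddCommGroup B'] [Module k B'] [AddCommGroup B''] [Module k B'']
  [AddCommGroup C'] [Module k C'] [AddCommGroup C''] [Module k C'']

/-- Inclusion of `B'⊗C'` into `(B'⊕B'')⊗(C'⊕C'')`. -/
def incl2L : (B' ⊗[k] C') →ₗ[k] ((B' × B'') ⊗[k] (C' × C'')) :=
  TensorProduct.map (LinearMap.inl k B' B'') (LinearMap.inl k C' C'')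

/-- Inclusion of `B''⊗C''` into `(B'⊕B'')⊗(C'⊕C'')`. -/
def incl2R : (B'' ⊗[k] C'') →ₗ[k] ((B' × B'') ⊗[k] (C' × C'')) :=
  TensorProduct.map (LinearMap.inr k B' B'') (LinearMap.inr k C' C'')

namespace RankAdd

variable {k} {B C : Type*} [AddCommGroup B] [Module k B]
  [AddCommGroup C] [Module k C]

lemma sRank_le {W : Submodule k (B ⊗[k] C)} {r : ℕ} (x : Fin r → B) (y : Fin r → C)
    (h : W ≤ Submodule.span k (Set.range fun i => x i ⊗ₜ[k] y i)) : sRank k W ≤ r :=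
  Nat.sInf_le ⟨x, y, h⟩

lemma exists_cov [FiniteDimensional k B] [FiniteDimensional k C] (W : Submodule k (B ⊗[k] C)) :
    ∃ (x : Fin (sRank k W) → B) (y : Fin (sRank k W) → C),
      W ≤ Submodule.span k (Set.range fun i => x i ⊗ₜ[k] y i) := by
  have hne : {r : ℕ | ∃ (b : Fin r → B) (c : Fin r → C),
      W ≤ Submodule.span k (Set.range fun i => b i ⊗ₜ[k] c i)}.Nonempty := by
    classical
    set bB := Module.finBasis k B
    set bC := Module.finBasis k C
    refine ⟨finrank k B * finrank k C,
      fun i => bB (finProdFinEquiv.symm i).1, fun i => bC (finProdFinEquiv.symm i).2, ?_⟩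
    have h1 : (fun i : Fin (finrank k B * finrank k C) =>
        bB (finProdFinEquiv.symm i).1 ⊗ₜ[k] bC (finProdFinEquiv.symm i).2)
        = (fun p : Fin (finrank k B) × Fin (finrank k C) => bB p.1 ⊗ₜ[k] bC p.2) ∘
          finProdFinEquiv.symm := rfl
    have h2 : Set.range (fun p : Fin (finrank k B) × Fin (finrank k C) => bB p.1 ⊗ₜ[k] bC p.2)
        = Set.range ⇑(bB.tensorProduct bC) := by
      have hfg : (fun p : Fin (finrank k B) × Fin (finrank k C) => bB p.1 ⊗ₜ[k] bC p.2)
          = ⇑(bB.tensorProduct bC) := by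
        funext p
        exact (Basis.tensorProduct_apply bB bC p.1 p.2).symm
      rw [hfg]
    rw [h1, finProdFinEquiv.symm.surjective.range_comp, h2, Basis.span_eq]
    exact le_top
  exact Nat.sInf_mem hne

lemma sRank_mono [FiniteDimensional k B] [FiniteDimensional k C]
    {W₁ W₂ : Submodule k (B ⊗[k] C)} (h : W₁ ≤ W₂) : sRank k W₁ ≤ sRank k W₂ := by
  obtain ⟨x, y, hc⟩ := exists_cov W₂
  exact sRank_le x y (h.trans hc)

lemma sRank_bot : sRank k (⊥ : Submodule k (B ⊗[k] C)) = 0 :=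
  Nat.le_zero.mp (sRank_le (fun i : Fin 0 => 0) (fun _ => 0) bot_le)

lemma one_le_sRank [FiniteDimensional k B] [FiniteDimensional k C]
    {W : Submodule k (B ⊗[k] C)} (h : W ≠ ⊥) : 1 ≤ sRank k W := by
  by_contra h0
  push_neg at h0
  have h0 : sRank k W = 0 := by omega
  obtain ⟨x, y, hc⟩ := exists_cov W
  have he : IsEmpty (Fin (sRank k W)) := by rw [h0]; infer_instance
  rw [Set.range_eq_empty, Submodule.span_empty, le_bot_iff] at hc
  exact h hc

lemma sRank_map_le [FiniteDimensional k B] [FiniteDimensional k C]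
    {D E : Type*} [AddCommGroup D] [Module k D] [AddCommGroup E] [Module k E]
    (φ : B →ₗ[k] D) (ψ : C →ₗ[k] E) (W : Submodule k (B ⊗[k] C)) :
    sRank k (Submodule.map (TensorProduct.map φ ψ) W) ≤ sRank k W := by
  obtain ⟨x, y, hc⟩ := exists_cov W
  refine sRank_le (fun i => φ (x i)) (fun i => ψ (y i)) ?_
  refine (Submodule.map_mono hc).trans ?_
  rw [Submodule.map_span]
  refine Submodule.span_le.mpr ?_
  rintro _ ⟨_, ⟨i, rfl⟩, rfl⟩
  exact Submodule.subset_span ⟨i, by simp⟩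

lemma sRank_sup_le [FiniteDimensional k B] [FiniteDimensional k C]
    (W₁ W₂ : Submodule k (B ⊗[k] C)) :
    sRank k (W₁ ⊔ W₂) ≤ sRank k W₁ + sRank k W₂ := by
  obtain ⟨x₁, y₁, h₁⟩ := exists_cov W₁
  obtain ⟨x₂, y₂, h₂⟩ := exists_cov W₂
  refine sRank_le (Fin.append x₁ x₂) (Fin.append y₁ y₂) (sup_le ?_ ?_)
  · refine h₁.trans (Submodule.span_mono ?_)
    rintro _ ⟨i, rfl⟩
    exact ⟨Fin.castAdd _ i, by simp [Fin.append_left]⟩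
  · refine h₂.trans (Submodule.span_mono ?_)
    rintro _ ⟨i, rfl⟩
    exact ⟨Fin.natAdd _ i, by simp [Fin.append_right]⟩

lemma sRank_single (b : B) (c : C) : sRank k (Submodule.span k {b ⊗ₜ[k] c}) ≤ 1 := by
  refine sRank_le (fun _ : Fin 1 => b) (fun _ => c) (Submodule.span_mono ?_)
  rintro _ rfl
  exact ⟨0, rfl⟩

lemma sRank_sup_single_le [FiniteDimensional k B] [FiniteDimensional k C]
    (W : Submodule k (B ⊗[k] C)) (b : B) (c : C) :
    sRank k (W ⊔ Submodule.span k {b ⊗ₜ[k] c}) ≤ sRank k W + 1 :=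
  (sRank_sup_le _ _).trans (by have := sRank_single (k := k) b c; omega)

/-- Contraction by a functional on the left factor. -/
def kB (f : B →ₗ[k] k) : B ⊗[k] C →ₗ[k] C :=
  (TensorProduct.lid k C).toLinearMap ∘ₗ TensorProduct.map f LinearMap.id

@[simp] lemma kB_tmul (f : B →ₗ[k] k) (x : B) (y : C) : kB f (x ⊗ₜ[k] y) = f x • y := by
  simp [kB]

/-- Contraction by a functional on the right factor. -/
def kC (g : C →ₗ[k] k) : B ⊗[k] C →ₗ[k] B :=
  (TensorProduct.rid k B).toLinearMap ∘ₗ TensorProduct.map LinearMap.id g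

@[simp] lemma kC_tmul (g : C →ₗ[k] k) (x : B) (y : C) : kC g (x ⊗ₜ[k] y) = g y • x := by
  simp [kC]

/-- Substitution step on the left factor. -/
lemma subB {r : ℕ} (x : Fin (r+1) → B) (y : Fin (r+1) → C) (f : B →ₗ[k] k)
    (i₀ : Fin (r+1)) (h0 : f (x i₀) ≠ 0) (w : B ⊗[k] C)
    (hw : w ∈ Submodule.span k (Set.range fun i => x i ⊗ₜ[k] y i)) (hker : kB f w = 0) :
    w ∈ Submodule.span k (Set.range fun j : Fin r =>
      (x (i₀.succAbove j) - (f (x (i₀.succAbove j)) / f (x i₀)) • x i₀) ⊗ₜ[k] y (i₀.succAbove j)) := by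
  rw [Submodule.mem_span_range_iff_exists_fun] at hw
  obtain ⟨a, ha⟩ := hw
  have hker' : ∑ i : Fin (r+1), (a i * f (x i)) • y i = 0 := by
    rw [← hker, ← ha, map_sum]
    refine Finset.sum_congr rfl fun i _ => ?_
    rw [map_smul, kB_tmul, smul_smul, mul_comm]
  have hsplit := Fin.sum_univ_succAbove (fun i => (a i * f (x i)) • y i) i₀
  rw [hker'] at hsplit
  have hs : ∑ j : Fin r, (a (i₀.succAbove j) * f (x (i₀.succAbove j))) • y (i₀.succAbove j)
      = -((a i₀ * f (x i₀)) • y i₀) := by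
    rw [eq_neg_iff_add_eq_zero, add_comm, ← hsplit]
  have step1 : (∑ j : Fin r, a (i₀.succAbove j) •
        ((x (i₀.succAbove j) - (f (x (i₀.succAbove j)) / f (x i₀)) • x i₀) ⊗ₜ[k] y (i₀.succAbove j)))
      = (∑ j : Fin r, a (i₀.succAbove j) • (x (i₀.succAbove j) ⊗ₜ[k] y (i₀.succAbove j)))
        - x i₀ ⊗ₜ[k] (∑ j : Fin r,
            (a (i₀.succAbove j) * (f (x (i₀.succAbove j)) / f (x i₀))) • y (i₀.succAbove j)) := by
    rw [tmul_sum, ← Finset.sum_sub_distrib]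
    refine Finset.sum_congr rfl fun j _ => ?_
    simp only [sub_tmul, smul_sub, ← smul_tmul', smul_smul, tmul_smul]
  have hz : (∑ j : Fin r,
        (a (i₀.succAbove j) * (f (x (i₀.succAbove j)) / f (x i₀))) • y (i₀.succAbove j))
      = -(a i₀ • y i₀) := by
    have e1 : ∀ j : Fin r, (a (i₀.succAbove j) * (f (x (i₀.succAbove j)) / f (x i₀))) • y (i₀.succAbove j)
        = (f (x i₀))⁻¹ • ((a (i₀.succAbove j) * f (x (i₀.succAbove j))) • y (i₀.succAbove j)) := by
      intro j
      rw [smul_smul]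
      congr 1
      field_simp
    rw [Finset.sum_congr rfl (fun j _ => e1 j), ← Finset.smul_sum, hs, smul_neg, smul_smul]
    have hd : (f (x i₀))⁻¹ * (a i₀ * f (x i₀)) = a i₀ := by
      field_simp
    rw [hd]
  have step2 : (∑ j : Fin r, a (i₀.succAbove j) • (x (i₀.succAbove j) ⊗ₜ[k] y (i₀.succAbove j)))
      = w - a i₀ • (x i₀ ⊗ₜ[k] y i₀) := by
    have h2 := Fin.sum_univ_succAbove (fun i => a i • (x i ⊗ₜ[k] y i)) i₀
    rw [ha] at h2
    rw [eq_sub_iff_add_eq, add_comm, ← h2]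
  have key : (∑ j : Fin r, a (i₀.succAbove j) •
        ((x (i₀.succAbove j) - (f (x (i₀.succAbove j)) / f (x i₀)) • x i₀) ⊗ₜ[k] y (i₀.succAbove j))) = w := by
    rw [step1, step2, hz, tmul_neg, tmul_smul, sub_neg_eq_add, sub_add_cancel]
  rw [← key]
  exact Submodule.sum_mem _ fun j _ => Submodule.smul_mem _ _ (Submodule.subset_span ⟨j, rfl⟩)

/-- Substitution step on the right factor. -/
lemma subC {r : ℕ} (x : Fin (r+1) → B) (y : Fin (r+1) → C) (g : C →ₗ[k] k)
    (i₀ : Fin (r+1)) (h0 : g (y i₀) ≠ 0) (w : B ⊗[k] C)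
    (hw : w ∈ Submodule.span k (Set.range fun i => x i ⊗ₜ[k] y i)) (hker : kC g w = 0) :
    w ∈ Submodule.span k (Set.range fun j : Fin r =>
      x (i₀.succAbove j) ⊗ₜ[k] (y (i₀.succAbove j) - (g (y (i₀.succAbove j)) / g (y i₀)) • y i₀)) := by
  rw [Submodule.mem_span_range_iff_exists_fun] at hw
  obtain ⟨a, ha⟩ := hw
  have hker' : ∑ i : Fin (r+1), (a i * g (y i)) • x i = 0 := by
    rw [← hker, ← ha, map_sum]
    refine Finset.sum_congr rfl fun i _ => ?_
    rw [map_smul, kC_tmul, smul_smul, mul_comm]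
  have hsplit := Fin.sum_univ_succAbove (fun i => (a i * g (y i)) • x i) i₀
  rw [hker'] at hsplit
  have hs : ∑ j : Fin r, (a (i₀.succAbove j) * g (y (i₀.succAbove j))) • x (i₀.succAbove j)
      = -((a i₀ * g (y i₀)) • x i₀) := by
    rw [eq_neg_iff_add_eq_zero, add_comm, ← hsplit]
  have step1 : (∑ j : Fin r, a (i₀.succAbove j) •
        (x (i₀.succAbove j) ⊗ₜ[k] (y (i₀.succAbove j) - (g (y (i₀.succAbove j)) / g (y i₀)) • y i₀)))
      = (∑ j : Fin r, a (i₀.succAbove j) • (x (i₀.succAbove j) ⊗ₜ[k] y (i₀.succAbove j)))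
        - (∑ j : Fin r,
            (a (i₀.succAbove j) * (g (y (i₀.succAbove j)) / g (y i₀))) • x (i₀.succAbove j)) ⊗ₜ[k] y i₀ := by
    rw [sum_tmul, ← Finset.sum_sub_distrib]
    refine Finset.sum_congr rfl fun j _ => ?_
    simp only [tmul_sub, smul_sub, tmul_smul, smul_smul, ← smul_tmul']
  have hz : (∑ j : Fin r,
        (a (i₀.succAbove j) * (g (y (i₀.succAbove j)) / g (y i₀))) • x (i₀.succAbove j))
      = -(a i₀ • x i₀) := by
    have e1 : ∀ j : Fin r, (a (i₀.succAbove j) * (g (y (i₀.succAbove j)) / g (y i₀))) • x (i₀.succAbove j)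
        = (g (y i₀))⁻¹ • ((a (i₀.succAbove j) * g (y (i₀.succAbove j))) • x (i₀.succAbove j)) := by
      intro j
      rw [smul_smul]
      congr 1
      field_simp
    rw [Finset.sum_congr rfl (fun j _ => e1 j), ← Finset.smul_sum, hs, smul_neg, smul_smul]
    have hd : (g (y i₀))⁻¹ * (a i₀ * g (y i₀)) = a i₀ := by
      field_simp
    rw [hd]
  have step2 : (∑ j : Fin r, a (i₀.succAbove j) • (x (i₀.succAbove j) ⊗ₜ[k] y (i₀.succAbove j)))
      = w - a i₀ • (x i₀ ⊗ₜ[k] y i₀) := by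
    have h2 := Fin.sum_univ_succAbove (fun i => a i • (x i ⊗ₜ[k] y i)) i₀
    rw [ha] at h2
    rw [eq_sub_iff_add_eq, add_comm, ← h2]
  have key : (∑ j : Fin r, a (i₀.succAbove j) •
        (x (i₀.succAbove j) ⊗ₜ[k] (y (i₀.succAbove j) - (g (y (i₀.succAbove j)) / g (y i₀)) • y i₀))) = w := by
    rw [step1, step2, hz, neg_tmul, smul_tmul', sub_neg_eq_add, sub_add_cancel]
  rw [← key]
  exact Submodule.sum_mem _ fun j _ => Submodule.smul_mem _ _ (Submodule.subset_span ⟨j, rfl⟩)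


lemma single_step [FiniteDimensional k B] [FiniteDimensional k C]
    (W : Submodule k (B ⊗[k] C)) (f : B →ₗ[k] k) (hne : ¬ W ≤ LinearMap.ker (kB f)) :
    sRank k (W ⊓ LinearMap.ker (kB f)) + 1 ≤ sRank k W := by
  suffices H : ∀ (r : ℕ) (x : Fin r → B) (y : Fin r → C),
      W ≤ Submodule.span k (Set.range fun i => x i ⊗ₜ[k] y i) → sRank k (W ⊓ LinearMap.ker (kB f)) + 1 ≤ r by
    obtain ⟨x, y, hc⟩ := exists_cov W
    exact H _ x y hc
  intro r x y hc
  have hex : ∃ i, f (x i) ≠ 0 := by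
    by_contra hall
    push_neg at hall
    refine hne (hc.trans ?_)
    rw [Submodule.span_le]
    rintro _ ⟨i, rfl⟩
    simp only [SetLike.mem_coe, LinearMap.mem_ker, kB_tmul, hall i, zero_smul]
  obtain ⟨i₀, hi₀⟩ := hex
  cases r with
  | zero => exact i₀.elim0
  | succ r' =>
    have hV : W ⊓ LinearMap.ker (kB f) ≤ Submodule.span k (Set.range fun j : Fin r' =>
        (x (i₀.succAbove j) - (f (x (i₀.succAbove j)) / f (x i₀)) • x i₀) ⊗ₜ[k] y (i₀.succAbove j)) := by
      rintro w hw
      rw [Submodule.mem_inf] at hw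
      exact subB x y f i₀ hi₀ w (hc hw.1) (LinearMap.mem_ker.mp hw.2)
    have := sRank_le _ _ hV
    omega

lemma single_stepC [FiniteDimensional k B] [FiniteDimensional k C]
    (W : Submodule k (B ⊗[k] C)) (g : C →ₗ[k] k) (hne : ¬ W ≤ LinearMap.ker (kC g)) :
    sRank k (W ⊓ LinearMap.ker (kC g)) + 1 ≤ sRank k W := by
  suffices H : ∀ (r : ℕ) (x : Fin r → B) (y : Fin r → C),
      W ≤ Submodule.span k (Set.range fun i => x i ⊗ₜ[k] y i) → sRank k (W ⊓ LinearMap.ker (kC g)) + 1 ≤ r by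
    obtain ⟨x, y, hc⟩ := exists_cov W
    exact H _ x y hc
  intro r x y hc
  have hex : ∃ i, g (y i) ≠ 0 := by
    by_contra hall
    push_neg at hall
    refine hne (hc.trans ?_)
    rw [Submodule.span_le]
    rintro _ ⟨i, rfl⟩
    simp only [SetLike.mem_coe, LinearMap.mem_ker, kC_tmul, hall i, zero_smul]
  obtain ⟨i₀, hi₀⟩ := hex
  cases r with
  | zero => exact i₀.elim0
  | succ r' =>
    have hV : W ⊓ LinearMap.ker (kC g) ≤ Submodule.span k (Set.range fun j : Fin r' =>
        x (i₀.succAbove j) ⊗ₜ[k] (y (i₀.succAbove j) - (g (y (i₀.succAbove j)) / g (y i₀)) • y i₀)) := by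
      rintro w hw
      rw [Submodule.mem_inf] at hw
      exact subC x y g i₀ hi₀ w (hc hw.1) (LinearMap.mem_ker.mp hw.2)
    have := sRank_le _ _ hV
    omega

lemma double_step [FiniteDimensional k B] [FiniteDimensional k C]
    (W : Submodule k (B ⊗[k] C)) (f : B →ₗ[k] k) (g : C →ₗ[k] k)
    (hnef : ¬ W ≤ LinearMap.ker (kB f)) (hneg : ¬ W ≤ LinearMap.ker (kC g))
    (hfail : ∀ v : B, Submodule.map (kC g) W ≤ Submodule.span k {v} → f v = 0) :
    sRank k (W ⊓ LinearMap.ker (kB f) ⊓ LinearMap.ker (kC g)) + 2 ≤ sRank k W := by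
  suffices H : ∀ (r : ℕ) (x : Fin r → B) (y : Fin r → C),
      W ≤ Submodule.span k (Set.range fun i => x i ⊗ₜ[k] y i) → sRank k (W ⊓ LinearMap.ker (kB f) ⊓ LinearMap.ker (kC g)) + 2 ≤ r by
    obtain ⟨x, y, hc⟩ := exists_cov W
    exact H _ x y hc
  intro r x y hc
  have hexf : ∃ i, f (x i) ≠ 0 := by
    by_contra hall
    push_neg at hall
    refine hnef (hc.trans ?_)
    rw [Submodule.span_le]
    rintro _ ⟨i, rfl⟩
    simp only [SetLike.mem_coe, LinearMap.mem_ker, kB_tmul, hall i, zero_smul]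
  have hexg : ∃ i, g (y i) ≠ 0 := by
    by_contra hall
    push_neg at hall
    refine hneg (hc.trans ?_)
    rw [Submodule.span_le]
    rintro _ ⟨i, rfl⟩
    simp only [SetLike.mem_coe, LinearMap.mem_ker, kC_tmul, hall i, zero_smul]
  have hex2 : ∃ (i₀ i₁ : Fin r), f (x i₀) ≠ 0 ∧ g (y i₁) ≠ 0 ∧ i₁ ≠ i₀ := by
    by_cases hcase : ∃ i, f (x i) ≠ 0 ∧ g (y i) = 0
    · obtain ⟨i₀, hf0, hg0⟩ := hcase
      obtain ⟨i₁, hg1⟩ := hexg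
      exact ⟨i₀, i₁, hf0, hg1, fun h => hg1 (h ▸ hg0)⟩
    · push_neg at hcase
      obtain ⟨i₀, hf0⟩ := hexf
      by_cases hcase2 : ∃ i, i ≠ i₀ ∧ g (y i) ≠ 0
      · obtain ⟨i₁, hne1, hg1⟩ := hcase2
        exact ⟨i₀, i₁, hf0, hg1, hne1⟩
      · push_neg at hcase2
        exfalso
        have hmap : Submodule.map (kC g) W ≤ Submodule.span k {x i₀} := by
          rintro _ ⟨w, hw, rfl⟩
          have hmem := hc hw
          rw [Submodule.mem_span_range_iff_exists_fun] at hmem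
          obtain ⟨a, ha⟩ := hmem
          rw [← ha, map_sum]
          have hterm : ∀ i : Fin r, kC g (a i • (x i ⊗ₜ[k] y i)) = (a i * g (y i)) • x i := by
            intro i
            rw [map_smul, kC_tmul, smul_smul, mul_comm]
          rw [Finset.sum_congr rfl (fun i _ => hterm i)]
          rw [Finset.sum_eq_single i₀ (fun i _ hi => by rw [hcase2 i hi, mul_zero, zero_smul])
            (fun h => absurd (Finset.mem_univ i₀) h)]
          exact Submodule.smul_mem _ _ (Submodule.mem_span_singleton_self _)
        exact hf0 (hfail _ hmap)
  obtain ⟨i₀, i₁, hf0, hg1, hne10⟩ := hex2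
  cases r with
  | zero => exact i₀.elim0
  | succ r' =>
    obtain ⟨j₁, hj₁⟩ := Fin.exists_succAbove_eq hne10
    cases r' with
    | zero => exact absurd (Fin.fin_one_eq_zero i₁ ▸ Fin.fin_one_eq_zero i₀ ▸ rfl) hne10
    | succ r'' =>
      have hgy' : g (y (i₀.succAbove j₁)) ≠ 0 := by rw [hj₁]; exact hg1
      have hV : W ⊓ LinearMap.ker (kB f) ⊓ LinearMap.ker (kC g) ≤
          Submodule.span k (Set.range fun j2 : Fin r'' =>
            (x (i₀.succAbove (j₁.succAbove j2)) -
              (f (x (i₀.succAbove (j₁.succAbove j2))) / f (x i₀)) • x i₀) ⊗ₜ[k]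
            (y (i₀.succAbove (j₁.succAbove j2)) -
              (g (y (i₀.succAbove (j₁.succAbove j2))) / g (y (i₀.succAbove j₁))) •
                y (i₀.succAbove j₁))) := by
        rintro w hw
        rw [Submodule.mem_inf] at hw
        obtain ⟨hw1, hwg⟩ := hw
        rw [Submodule.mem_inf] at hw1
        obtain ⟨hwW, hwf⟩ := hw1
        have h1 := subB x y f i₀ hf0 w (hc hwW) (LinearMap.mem_ker.mp hwf)
        exact subC (fun j => x (i₀.succAbove j) - (f (x (i₀.succAbove j)) / f (x i₀)) • x i₀)
          (fun j => y (i₀.succAbove j)) g j₁ hgy' w h1 (LinearMap.mem_ker.mp hwg)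
      have := sRank_le _ _ hV
      omega

section Helpers

variable {V : Type*} [AddCommGroup V] [Module k V]

lemma exists_dual_one {v : V} (hv : v ≠ 0) : ∃ f : V →ₗ[k] k, f v = 1 := by
  obtain ⟨q, hq⟩ := Submodule.exists_isCompl (Submodule.span k {v})
  refine ⟨(LinearEquiv.coord k V v hv).toLinearMap ∘ₗ
    (Submodule.span k {v}).linearProjOfIsCompl q hq, ?_⟩
  have h1 : ((Submodule.span k {v}).linearProjOfIsCompl q hq) v
      = ⟨v, Submodule.mem_span_singleton_self v⟩ :=
    Submodule.linearProjOfIsCompl_apply_left hq ⟨v, Submodule.mem_span_singleton_self v⟩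
  simp [h1, LinearEquiv.coord_self]

lemma exists_dual_zero_one {v w : V} (h : w ∉ Submodule.span k {v}) :
    ∃ f : V →ₗ[k] k, f v = 0 ∧ f w = 1 := by
  set p := Submodule.span k {v}
  have hw : p.mkQ w ≠ 0 := by
    rw [Submodule.mkQ_apply, ne_eq, Submodule.Quotient.mk_eq_zero]
    exact h
  obtain ⟨g, hg⟩ := exists_dual_one (k := k) hw
  refine ⟨g ∘ₗ p.mkQ, ?_, hg⟩
  have : p.mkQ v = 0 := by
    rw [Submodule.mkQ_apply, Submodule.Quotient.mk_eq_zero]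
    exact Submodule.mem_span_singleton_self v
  simp [this]

lemma exists_factor {M N : Type*} [AddCommGroup M] [Module k M] [AddCommGroup N] [Module k N]
    (D : M →ₗ[k] N) (ℓ : M →ₗ[k] k) (h : LinearMap.ker D ≤ LinearMap.ker ℓ) :
    ∃ g : N →ₗ[k] k, ∀ m, g (D m) = ℓ m := by
  obtain ⟨q, hq⟩ := Submodule.exists_isCompl (LinearMap.range D)
  refine ⟨((LinearMap.ker D).liftQ ℓ h ∘ₗ D.quotKerEquivRange.symm.toLinearMap) ∘ₗ
    (LinearMap.range D).linearProjOfIsCompl q hq, fun m => ?_⟩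
  have h1 : ((LinearMap.range D).linearProjOfIsCompl q hq) (D m)
      = ⟨D m, LinearMap.mem_range_self D m⟩ :=
    Submodule.linearProjOfIsCompl_apply_left hq ⟨D m, LinearMap.mem_range_self D m⟩
  have h2 : D.quotKerEquivRange.symm ⟨D m, LinearMap.mem_range_self D m⟩
      = Submodule.Quotient.mk m := by
    rw [LinearEquiv.symm_apply_eq]
    exact Subtype.ext (LinearMap.quotKerEquivRange_apply_mk D m).symm
  simp only [LinearMap.coe_comp, Function.comp_apply, h1, LinearEquiv.coe_toLinearMap, h2]
  exact Submodule.liftQ_apply _ ℓ m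

end Helpers

section Ambient

variable {B' B'' C' C'' : Type*}
  [AddCommGroup B'] [Module k B'] [AddCommGroup B''] [Module k B'']
  [AddCommGroup C'] [Module k C'] [AddCommGroup C''] [Module k C'']

lemma kB_comp_incl2L (f₀ : B'' →ₗ[k] k) :
    kB (f₀ ∘ₗ LinearMap.snd k B' B'') ∘ₗ incl2L k B' B'' C' C'' = 0 := by
  apply TensorProduct.ext'
  intro x y
  simp [incl2L, kB]

lemma kB_comp_incl2R (f₀ : B'' →ₗ[k] k) :
    kB (f₀ ∘ₗ LinearMap.snd k B' B'') ∘ₗ incl2R k B' B'' C' C''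
      = LinearMap.inr k C' C'' ∘ₗ kB f₀ := by
  apply TensorProduct.ext'
  intro x y
  simp [incl2R, kB, Prod.smul_mk]

lemma kC_comp_incl2L (g₀ : C'' →ₗ[k] k) :
    kC (g₀ ∘ₗ LinearMap.snd k C' C'') ∘ₗ incl2L k B' B'' C' C'' = 0 := by
  apply TensorProduct.ext'
  intro x y
  simp [incl2L, kC]

lemma kC_comp_incl2R (g₀ : C'' →ₗ[k] k) :
    kC (g₀ ∘ₗ LinearMap.snd k C' C'') ∘ₗ incl2R k B' B'' C' C''
      = LinearMap.inr k B' B'' ∘ₗ kC g₀ := by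
  apply TensorProduct.ext'
  intro x y
  simp [incl2R, kC, Prod.smul_mk]

lemma sup_inf_kerB (W' : Submodule k (B' ⊗[k] C')) (X : Submodule k (B'' ⊗[k] C''))
    (f₀ : B'' →ₗ[k] k) :
    (Submodule.map (incl2L k B' B'' C' C'') W' ⊔ Submodule.map (incl2R k B' B'' C' C'') X)
      ⊓ LinearMap.ker (kB (f₀ ∘ₗ LinearMap.snd k B' B''))
    = Submodule.map (incl2L k B' B'' C' C'') W' ⊔
        Submodule.map (incl2R k B' B'' C' C'') (X ⊓ LinearMap.ker (kB f₀)) := by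
  have hL : ∀ u', kB (f₀ ∘ₗ LinearMap.snd k B' B'') (incl2L k B' B'' C' C'' u') = 0 := by
    intro u'
    have := LinearMap.congr_fun (kB_comp_incl2L (C' := C') (C'' := C'') f₀) u'
    simpa using this
  have hR : ∀ v'', kB (f₀ ∘ₗ LinearMap.snd k B' B'') (incl2R k B' B'' C' C'' v'')
      = LinearMap.inr k C' C'' (kB f₀ v'') := by
    intro v''
    have := LinearMap.congr_fun (kB_comp_incl2R (C' := C') (B' := B') f₀) v''
    simpa using this
  apply le_antisymm
  · rintro w hw
    rw [Submodule.mem_inf] at hw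
    obtain ⟨hsup, hker⟩ := hw
    rw [Submodule.mem_sup] at hsup
    obtain ⟨u, hu, v, hv, rfl⟩ := hsup
    obtain ⟨u', hu', rfl⟩ := hu
    obtain ⟨v'', hv'', rfl⟩ := hv
    rw [LinearMap.mem_ker, map_add, hL u', zero_add, hR v''] at hker
    have hker' : kB f₀ v'' = 0 := by
      have h2 := congrArg Prod.snd hker
      simpa using h2
    rw [Submodule.mem_sup]
    exact ⟨_, ⟨u', hu', rfl⟩, _, ⟨v'', ⟨hv'', LinearMap.mem_ker.mpr hker'⟩, rfl⟩, rfl⟩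
  · apply sup_le
    · refine le_inf le_sup_left ?_
      rintro _ ⟨u', _, rfl⟩
      exact LinearMap.mem_ker.mpr (hL u')
    · refine le_inf ((Submodule.map_mono inf_le_left).trans le_sup_right) ?_
      rintro _ ⟨v'', hv'', rfl⟩
      rw [LinearMap.mem_ker, hR v'', LinearMap.mem_ker.mp hv''.2, map_zero]

lemma sup_inf_kerC (W' : Submodule k (B' ⊗[k] C')) (X : Submodule k (B'' ⊗[k] C''))
    (g₀ : C'' →ₗ[k] k) :
    (Submodule.map (incl2L k B' B'' C' C'') W' ⊔ Submodule.map (incl2R k B' B'' C' C'') X)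
      ⊓ LinearMap.ker (kC (g₀ ∘ₗ LinearMap.snd k C' C''))
    = Submodule.map (incl2L k B' B'' C' C'') W' ⊔
        Submodule.map (incl2R k B' B'' C' C'') (X ⊓ LinearMap.ker (kC g₀)) := by
  have hL : ∀ u', kC (g₀ ∘ₗ LinearMap.snd k C' C'') (incl2L k B' B'' C' C'' u') = 0 := by
    intro u'
    have := LinearMap.congr_fun (kC_comp_incl2L (B' := B') (B'' := B'') g₀) u'
    simpa using this
  have hR : ∀ v'', kC (g₀ ∘ₗ LinearMap.snd k C' C'') (incl2R k B' B'' C' C'' v'')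
      = LinearMap.inr k B' B'' (kC g₀ v'') := by
    intro v''
    have := LinearMap.congr_fun (kC_comp_incl2R (C' := C') (B' := B') g₀) v''
    simpa using this
  apply le_antisymm
  · rintro w hw
    rw [Submodule.mem_inf] at hw
    obtain ⟨hsup, hker⟩ := hw
    rw [Submodule.mem_sup] at hsup
    obtain ⟨u, hu, v, hv, rfl⟩ := hsup
    obtain ⟨u', hu', rfl⟩ := hu
    obtain ⟨v'', hv'', rfl⟩ := hv
    rw [LinearMap.mem_ker, map_add, hL u', zero_add, hR v''] at hker
    have hker' : kC g₀ v'' = 0 := by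
      have h2 := congrArg Prod.snd hker
      simpa using h2
    rw [Submodule.mem_sup]
    exact ⟨_, ⟨u', hu', rfl⟩, _, ⟨v'', ⟨hv'', LinearMap.mem_ker.mpr hker'⟩, rfl⟩, rfl⟩
  · apply sup_le
    · refine le_inf le_sup_left ?_
      rintro _ ⟨u', _, rfl⟩
      exact LinearMap.mem_ker.mpr (hL u')
    · refine le_inf ((Submodule.map_mono inf_le_left).trans le_sup_right) ?_
      rintro _ ⟨v'', hv'', rfl⟩
      rw [LinearMap.mem_ker, hR v'', LinearMap.mem_ker.mp hv''.2, map_zero]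

lemma map_proj_incl2L (W' : Submodule k (B' ⊗[k] C')) :
    Submodule.map (TensorProduct.map (LinearMap.fst k B' B'') (LinearMap.fst k C' C''))
      (Submodule.map (incl2L k B' B'' C' C'') W') = W' := by
  rw [← Submodule.map_comp]
  have hcomp : TensorProduct.map (LinearMap.fst k B' B'') (LinearMap.fst k C' C'') ∘ₗ
      incl2L k B' B'' C' C'' = LinearMap.id := by
    rw [incl2L, ← TensorProduct.map_comp, LinearMap.fst_comp_inl, LinearMap.fst_comp_inl,
      TensorProduct.map_id]
  rw [hcomp, Submodule.map_id]

lemma sRank_le_mapL [FiniteDimensional k B'] [FiniteDimensional k B'']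
    [FiniteDimensional k C'] [FiniteDimensional k C''] (W' : Submodule k (B' ⊗[k] C')) :
    sRank k W' ≤ sRank k (Submodule.map (incl2L k B' B'' C' C'') W') := by
  conv_lhs => rw [← map_proj_incl2L (B'' := B'') (C'' := C'') W']
  exact sRank_map_le _ _ _

lemma kB_incl2R_apply (f₀ : B'' →ₗ[k] k) (w : B'' ⊗[k] C'') :
    kB (f₀ ∘ₗ LinearMap.snd k B' B'') (incl2R k B' B'' C' C'' w)
      = LinearMap.inr k C' C'' (kB f₀ w) := by
  have := LinearMap.congr_fun (kB_comp_incl2R (B' := B') (C' := C') f₀) w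
  simpa using this

lemma kC_incl2R_apply (g₀ : C'' →ₗ[k] k) (w : B'' ⊗[k] C'') :
    kC (g₀ ∘ₗ LinearMap.snd k C' C'') (incl2R k B' B'' C' C'' w)
      = LinearMap.inr k B' B'' (kC g₀ w) := by
  have := LinearMap.congr_fun (kC_comp_incl2R (B' := B') (C' := C') g₀) w
  simpa using this

end Ambient

lemma hook_decomp {B C : Type*} [AddCommGroup B] [Module k B] [AddCommGroup C] [Module k C]
    {W : Submodule k (B ⊗[k] C)} (h : IsHookShaped k 1 1 W) :
    ∃ (b : B) (c : C), b ≠ 0 ∧ c ≠ 0 ∧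
      ∀ w ∈ W, ∃ γ β, w = b ⊗ₜ[k] γ + β ⊗ₜ[k] c := by
  obtain ⟨B₁, C₁, hB₁, hC₁, hle⟩ := h
  obtain ⟨v, hv0, hv⟩ := finrank_eq_one_iff'.mp hB₁
  obtain ⟨u, hu0, hu⟩ := finrank_eq_one_iff'.mp hC₁
  refine ⟨(v : B), (u : C), by simpa using hv0, by simpa using hu0, fun w hw => ?_⟩
  have hw2 := hle hw
  rw [Submodule.mem_sup] at hw2
  obtain ⟨p, hp, q, hq, rfl⟩ := hw2
  have hp' : ∀ z ∈ LinearMap.range (TensorProduct.map B₁.subtype (LinearMap.id : C →ₗ[k] C)),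
      ∃ γ, z = (v : B) ⊗ₜ[k] γ := by
    intro z hz
    rw [TensorProduct.range_map_eq_span_tmul] at hz
    induction hz using Submodule.span_induction with
    | mem z hz =>
      obtain ⟨m, n, rfl⟩ := hz
      obtain ⟨a, ha⟩ := hv m
      refine ⟨a • n, ?_⟩
      rw [← ha]
      simp only [Submodule.coe_subtype, LinearMap.id_coe, id_eq, Submodule.coe_smul]
      rw [smul_tmul]
    | zero => exact ⟨0, (TensorProduct.tmul_zero _ _).symm⟩
    | add z₁ z₂ _ _ ih₁ ih₂ =>
      obtain ⟨γ₁, rfl⟩ := ih₁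
      obtain ⟨γ₂, rfl⟩ := ih₂
      exact ⟨γ₁ + γ₂, (TensorProduct.tmul_add _ _ _).symm⟩
    | smul r z _ ih =>
      obtain ⟨γ, rfl⟩ := ih
      exact ⟨r • γ, (TensorProduct.tmul_smul _ _ _).symm⟩
  have hq' : ∀ z ∈ LinearMap.range (TensorProduct.map (LinearMap.id : B →ₗ[k] B) C₁.subtype),
      ∃ β, z = β ⊗ₜ[k] (u : C) := by
    intro z hz
    rw [TensorProduct.range_map_eq_span_tmul] at hz
    induction hz using Submodule.span_induction with
    | mem z hz =>
      obtain ⟨m, n, rfl⟩ := hz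
      obtain ⟨a, ha⟩ := hu n
      refine ⟨a • m, ?_⟩
      rw [← ha]
      simp only [Submodule.coe_subtype, LinearMap.id_coe, id_eq, Submodule.coe_smul,
        TensorProduct.tmul_smul, TensorProduct.smul_tmul']
    | zero => exact ⟨0, (TensorProduct.zero_tmul _ _).symm⟩
    | add z₁ z₂ _ _ ih₁ ih₂ =>
      obtain ⟨β₁, rfl⟩ := ih₁
      obtain ⟨β₂, rfl⟩ := ih₂
      exact ⟨β₁ + β₂, (TensorProduct.add_tmul _ _ _).symm⟩
    | smul r z _ ih =>
      obtain ⟨β, rfl⟩ := ih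
      refine ⟨r • β, ?_⟩
      rw [smul_tmul']
  obtain ⟨γ, rfl⟩ := hp' p hp
  obtain ⟨β, rfl⟩ := hq' q hq
  exact ⟨γ, β, rfl⟩

section Main

variable {B' B'' C' C'' : Type*}
  [AddCommGroup B'] [Module k B'] [AddCommGroup B''] [Module k B'']
  [AddCommGroup C'] [Module k C'] [AddCommGroup C''] [Module k C'']
  [FiniteDimensional k B'] [FiniteDimensional k B'']
  [FiniteDimensional k C'] [FiniteDimensional k C'']

lemma step_schemaB (W' : Submodule k (B' ⊗[k] C')) (W'' W₀ : Submodule k (B'' ⊗[k] C''))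
    (f₀ : B'' →ₗ[k] k) (hW₀ : W₀ = W'' ⊓ LinearMap.ker (kB f₀))
    (hstep : sRank k W'' ≤ sRank k W₀ + 1)
    (hIH : sRank k W' + sRank k W₀ ≤ sRank k (Submodule.map (incl2L k B' B'' C' C'') W' ⊔
      Submodule.map (incl2R k B' B'' C' C'') W₀))
    (hne : ¬ (Submodule.map (incl2L k B' B'' C' C'') W' ⊔
      Submodule.map (incl2R k B' B'' C' C'') W'') ≤
        LinearMap.ker (kB (f₀ ∘ₗ LinearMap.snd k B' B''))) :
    sRank k W' + sRank k W'' ≤ sRank k (Submodule.map (incl2L k B' B'' C' C'') W' ⊔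
      Submodule.map (incl2R k B' B'' C' C'') W'') := by
  have hss := single_step _ (f₀ ∘ₗ LinearMap.snd k B' B'') hne
  rw [sup_inf_kerB W' W'' f₀, ← hW₀] at hss
  omega

lemma step_schemaC (W' : Submodule k (B' ⊗[k] C')) (W'' W₀ : Submodule k (B'' ⊗[k] C''))
    (g₀ : C'' →ₗ[k] k) (hW₀ : W₀ = W'' ⊓ LinearMap.ker (kC g₀))
    (hstep : sRank k W'' ≤ sRank k W₀ + 1)
    (hIH : sRank k W' + sRank k W₀ ≤ sRank k (Submodule.map (incl2L k B' B'' C' C'') W' ⊔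
      Submodule.map (incl2R k B' B'' C' C'') W₀))
    (hne : ¬ (Submodule.map (incl2L k B' B'' C' C'') W' ⊔
      Submodule.map (incl2R k B' B'' C' C'') W'') ≤
        LinearMap.ker (kC (g₀ ∘ₗ LinearMap.snd k C' C''))) :
    sRank k W' + sRank k W'' ≤ sRank k (Submodule.map (incl2L k B' B'' C' C'') W' ⊔
      Submodule.map (incl2R k B' B'' C' C'') W'') := by
  have hss := single_stepC _ (g₀ ∘ₗ LinearMap.snd k C' C'') hne
  rw [sup_inf_kerC W' W'' g₀, ← hW₀] at hss
  omega

lemma step_schemaD (W' : Submodule k (B' ⊗[k] C')) (W'' W₂ : Submodule k (B'' ⊗[k] C''))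
    (f₀ : B'' →ₗ[k] k) (g₀ : C'' →ₗ[k] k)
    (hW₂ : W₂ = W'' ⊓ LinearMap.ker (kB f₀) ⊓ LinearMap.ker (kC g₀))
    (hstep : sRank k W'' ≤ sRank k W₂ + 2)
    (hIH : sRank k W' + sRank k W₂ ≤ sRank k (Submodule.map (incl2L k B' B'' C' C'') W' ⊔
      Submodule.map (incl2R k B' B'' C' C'') W₂))
    (hne_f : ¬ (Submodule.map (incl2L k B' B'' C' C'') W' ⊔
      Submodule.map (incl2R k B' B'' C' C'') W'') ≤
        LinearMap.ker (kB (f₀ ∘ₗ LinearMap.snd k B' B'')))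
    (hne_g : ¬ (Submodule.map (incl2L k B' B'' C' C'') W' ⊔
      Submodule.map (incl2R k B' B'' C' C'') W'') ≤
        LinearMap.ker (kC (g₀ ∘ₗ LinearMap.snd k C' C'')))
    (hfail : ∀ v : B' × B'',
      Submodule.map (kC (g₀ ∘ₗ LinearMap.snd k C' C''))
        (Submodule.map (incl2L k B' B'' C' C'') W' ⊔
          Submodule.map (incl2R k B' B'' C' C'') W'') ≤ Submodule.span k {v} →
      (f₀ ∘ₗ LinearMap.snd k B' B'') v = 0) :
    sRank k W' + sRank k W'' ≤ sRank k (Submodule.map (incl2L k B' B'' C' C'') W' ⊔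
      Submodule.map (incl2R k B' B'' C' C'') W'') := by
  have hds := double_step _ (f₀ ∘ₗ LinearMap.snd k B' B'') (g₀ ∘ₗ LinearMap.snd k C' C'')
    hne_f hne_g hfail
  rw [sup_inf_kerB W' W'' f₀, sup_inf_kerC W' (W'' ⊓ LinearMap.ker (kB f₀)) g₀, ← hW₂] at hds
  omega

set_option maxHeartbeats 2000000 in
theorem main_aux (n : ℕ) :
    ∀ (W'' : Submodule k (B'' ⊗[k] C'')) (b : B'') (c : C''), b ≠ 0 → c ≠ 0 →
    (∀ w ∈ W'', ∃ γ β, w = b ⊗ₜ[k] γ + β ⊗ₜ[k] c) →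
    finrank k ↥W'' ≤ n →
    ∀ W' : Submodule k (B' ⊗[k] C'),
      sRank k W' + sRank k W'' ≤ sRank k (Submodule.map (incl2L k B' B'' C' C'') W' ⊔
        Submodule.map (incl2R k B' B'' C' C'') W'') := by
  induction n with
  | zero =>
    intro W'' b c hb hc hdec hfr W'
    have hbot : W'' = ⊥ := Submodule.finrank_eq_zero.mp (Nat.le_zero.mp hfr)
    rw [hbot, sRank_bot, Submodule.map_bot, sup_bot_eq, add_zero]
    exact sRank_le_mapL W'
  | succ n ih =>
    intro W'' b c hb hc hdec hfr W'
    by_cases hbot : W'' = ⊥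
    · rw [hbot, sRank_bot, Submodule.map_bot, sup_bot_eq, add_zero]
      exact sRank_le_mapL W'
    by_cases hH1 : ∃ w ∈ W'', (∃ β : B'', w = β ⊗ₜ[k] c) ∧ w ∉ Submodule.span k {b ⊗ₜ[k] c}
    · -- a rank-one element β⊗c of W'' outside the corner line : single substitution on B side
      obtain ⟨w₀, hw₀W, ⟨β, rfl⟩, hw₀span⟩ := hH1
      have hβ : β ∉ Submodule.span k {b} := by
        intro hmem
        obtain ⟨t, ht⟩ := Submodule.mem_span_singleton.mp hmem
        apply hw₀span
        rw [← ht, ← TensorProduct.smul_tmul']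
        exact Submodule.smul_mem _ t (Submodule.mem_span_singleton_self _)
      obtain ⟨f₀, hf₀b, hf₀β⟩ := exists_dual_zero_one (k := k) hβ
      have hkb : ∀ w ∈ W'', ∃ s : k, kB f₀ w = s • c := by
        intro w hw
        obtain ⟨γ, β', hwdec⟩ := hdec w hw
        refine ⟨f₀ β', ?_⟩
        rw [hwdec, map_add, kB_tmul, kB_tmul, hf₀b, zero_smul, zero_add]
      have hw₀ker : kB f₀ (β ⊗ₜ[k] c) = c := by
        rw [kB_tmul, hf₀β, one_smul]
      refine step_schemaB W' W'' (W'' ⊓ LinearMap.ker (kB f₀)) f₀ rfl ?_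
        (ih (W'' ⊓ LinearMap.ker (kB f₀)) b c hb hc
          (fun w hw => hdec w (Submodule.mem_inf.mp hw).1) ?_ W') ?_
      · -- sRank k W'' ≤ sRank k W₀ + 1
        refine (sRank_mono ?_).trans (sRank_sup_single_le _ β c)
        intro w hw
        obtain ⟨s, hs⟩ := hkb w hw
        have hker : kB f₀ (w - s • (β ⊗ₜ[k] c)) = 0 := by
          rw [map_sub, map_smul, hs, hw₀ker, sub_self]
        have hwe : w = (w - s • (β ⊗ₜ[k] c)) + s • (β ⊗ₜ[k] c) := (sub_add_cancel _ _).symm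
        rw [hwe]
        refine Submodule.add_mem _ (Submodule.mem_sup_left (Submodule.mem_inf.mpr
          ⟨sub_mem hw (Submodule.smul_mem _ _ hw₀W), LinearMap.mem_ker.mpr hker⟩))
          (Submodule.mem_sup_right (Submodule.smul_mem _ _ (Submodule.mem_span_singleton_self _)))
      · -- finrank bound
        have hlt : W'' ⊓ LinearMap.ker (kB f₀) < W'' := by
          refine lt_of_le_of_ne inf_le_left ?_
          intro heq
          have : β ⊗ₜ[k] c ∈ W'' ⊓ LinearMap.ker (kB f₀) := heq.symm ▸ hw₀W
          have h2 := LinearMap.mem_ker.mp this.2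
          rw [hw₀ker] at h2
          exact hc h2
        have := Submodule.finrank_lt_finrank_of_lt hlt
        omega
      · -- non-vanishing of the contraction on the big space
        intro hle
        have h1 := hle (Submodule.mem_sup_right (Submodule.mem_map_of_mem hw₀W))
        rw [LinearMap.mem_ker, kB_incl2R_apply, hw₀ker] at h1
        have h2 : c = 0 := by
          simpa [Prod.ext_iff] using h1
        exact hc h2
    by_cases hH2 : ∃ w ∈ W'', (∃ γ : C'', w = b ⊗ₜ[k] γ) ∧ w ∉ Submodule.span k {b ⊗ₜ[k] c}
    · -- a rank-one element b⊗γ of W'' outside the corner line : single substitution on C side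
      obtain ⟨w₀, hw₀W, ⟨γ, rfl⟩, hw₀span⟩ := hH2
      have hγ : γ ∉ Submodule.span k {c} := by
        intro hmem
        obtain ⟨t, ht⟩ := Submodule.mem_span_singleton.mp hmem
        apply hw₀span
        rw [← ht, TensorProduct.tmul_smul]
        exact Submodule.smul_mem _ t (Submodule.mem_span_singleton_self _)
      obtain ⟨g₀, hg₀c, hg₀γ⟩ := exists_dual_zero_one (k := k) hγ
      have hkb : ∀ w ∈ W'', ∃ s : k, kC g₀ w = s • b := by
        intro w hw
        obtain ⟨γ', β', hwdec⟩ := hdec w hw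
        refine ⟨g₀ γ', ?_⟩
        rw [hwdec, map_add, kC_tmul, kC_tmul, hg₀c, zero_smul, add_zero]
      have hw₀ker : kC g₀ (b ⊗ₜ[k] γ) = b := by
        rw [kC_tmul, hg₀γ, one_smul]
      refine step_schemaC W' W'' (W'' ⊓ LinearMap.ker (kC g₀)) g₀ rfl ?_
        (ih (W'' ⊓ LinearMap.ker (kC g₀)) b c hb hc
          (fun w hw => hdec w (Submodule.mem_inf.mp hw).1) ?_ W') ?_
      · refine (sRank_mono ?_).trans (sRank_sup_single_le _ b γ)
        intro w hw
        obtain ⟨s, hs⟩ := hkb w hw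
        have hker : kC g₀ (w - s • (b ⊗ₜ[k] γ)) = 0 := by
          rw [map_sub, map_smul, hs, hw₀ker, sub_self]
        have hwe : w = (w - s • (b ⊗ₜ[k] γ)) + s • (b ⊗ₜ[k] γ) := (sub_add_cancel _ _).symm
        rw [hwe]
        refine Submodule.add_mem _ (Submodule.mem_sup_left (Submodule.mem_inf.mpr
          ⟨sub_mem hw (Submodule.smul_mem _ _ hw₀W), LinearMap.mem_ker.mpr hker⟩))
          (Submodule.mem_sup_right (Submodule.smul_mem _ _ (Submodule.mem_span_singleton_self _)))
      · have hlt : W'' ⊓ LinearMap.ker (kC g₀) < W'' := by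
          refine lt_of_le_of_ne inf_le_left ?_
          intro heq
          have : b ⊗ₜ[k] γ ∈ W'' ⊓ LinearMap.ker (kC g₀) := heq.symm ▸ hw₀W
          have h2 := LinearMap.mem_ker.mp this.2
          rw [hw₀ker] at h2
          exact hb h2
        have := Submodule.finrank_lt_finrank_of_lt hlt
        omega
      · intro hle
        have h1 := hle (Submodule.mem_sup_right (Submodule.mem_map_of_mem hw₀W))
        rw [LinearMap.mem_ker, kC_incl2R_apply, hw₀ker] at h1
        have h2 : b = 0 := by
          simpa [Prod.ext_iff] using h1
        exact hb h2
    · push_neg at hH1 hH2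
      by_cases hall : W'' ≤ Submodule.span k {b ⊗ₜ[k] c}
      · -- W'' is the corner line
        obtain ⟨f₀, hf₀b1⟩ := exists_dual_one (k := k) hb
        have hW₀bot : W'' ⊓ LinearMap.ker (kB f₀) = ⊥ := by
          rw [eq_bot_iff]
          intro w hw
          obtain ⟨s, hs⟩ := Submodule.mem_span_singleton.mp (hall hw.1)
          have h2 := LinearMap.mem_ker.mp hw.2
          rw [← hs, map_smul, kB_tmul, hf₀b1, one_smul] at h2
          rcases smul_eq_zero.mp h2 with h | h
          · rw [← hs, h, zero_smul]
            exact Submodule.zero_mem _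
          · exact absurd h hc
        refine step_schemaB W' W'' (W'' ⊓ LinearMap.ker (kB f₀)) f₀ rfl ?_
          (ih (W'' ⊓ LinearMap.ker (kB f₀)) b c hb hc
            (fun w hw => hdec w (Submodule.mem_inf.mp hw).1) ?_ W') ?_
        · have h1 : sRank k W'' ≤ 1 := (sRank_mono hall).trans (sRank_single b c)
          have h0 : sRank k (W'' ⊓ LinearMap.ker (kB f₀)) = 0 := by
            rw [hW₀bot, sRank_bot]
          omega
        · rw [hW₀bot]
          simp
        · obtain ⟨w₀, hw₀W, hw₀0⟩ := (Submodule.ne_bot_iff W'').mp hbot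
          obtain ⟨s, hs⟩ := Submodule.mem_span_singleton.mp (hall hw₀W)
          have hs0 : s ≠ 0 := by
            intro h
            rw [h, zero_smul] at hs
            exact hw₀0 hs.symm
          intro hle
          have h1 := hle (Submodule.mem_sup_right (Submodule.mem_map_of_mem hw₀W))
          rw [LinearMap.mem_ker, kB_incl2R_apply] at h1
          have h2 : kB f₀ w₀ = 0 := by
            simpa [Prod.ext_iff] using h1
          rw [← hs, map_smul, kB_tmul, hf₀b1, one_smul] at h2
          rcases smul_eq_zero.mp h2 with h | h
          · exact hs0 h
          · exact hc h
      · -- the double substitution case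
        obtain ⟨w₁, hw₁W, hw₁span⟩ := SetLike.not_le_iff_exists.mp hall
        obtain ⟨γ₁, β₁, hw₁eq⟩ := hdec w₁ hw₁W
        have hγ₁ : γ₁ ∉ Submodule.span k {c} := by
          intro hmem
          obtain ⟨t, ht⟩ := Submodule.mem_span_singleton.mp hmem
          apply hw₁span
          refine hH1 w₁ hw₁W ⟨t • b + β₁, ?_⟩
          have he : b ⊗ₜ[k] (t • c) + β₁ ⊗ₜ[k] c = (t • b + β₁) ⊗ₜ[k] c := by
            rw [TensorProduct.add_tmul, TensorProduct.tmul_smul, TensorProduct.smul_tmul']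
          rw [hw₁eq, ← ht, he]
        have hβ₁ : β₁ ∉ Submodule.span k {b} := by
          intro hmem
          obtain ⟨t, ht⟩ := Submodule.mem_span_singleton.mp hmem
          apply hw₁span
          refine hH2 w₁ hw₁W ⟨γ₁ + t • c, ?_⟩
          have he : b ⊗ₜ[k] γ₁ + (t • b) ⊗ₜ[k] c = b ⊗ₜ[k] (γ₁ + t • c) := by
            rw [TensorProduct.tmul_add, TensorProduct.smul_tmul]
          rw [hw₁eq, ← ht, he]
        obtain ⟨g₀, hg₀c, hg₀γ₁⟩ := exists_dual_zero_one (k := k) hγ₁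
        obtain ⟨bs, hbs⟩ := exists_dual_one (k := k) hb
        set lam : B'' ⊗[k] C'' →ₗ[k] k := bs ∘ₗ kC g₀ with hlam_def
        have hkC_shape : ∀ w ∈ W'', kC g₀ w = lam w • b := by
          intro w hw
          obtain ⟨γ, β, hwdec⟩ := hdec w hw
          have h1 : kC g₀ w = g₀ γ • b := by
            rw [hwdec, map_add, kC_tmul, kC_tmul, hg₀c, zero_smul, add_zero]
          have h2 : lam w = g₀ γ := by
            rw [hlam_def, LinearMap.comp_apply, h1, map_smul, hbs, smul_eq_mul, mul_one]
          rw [h1, h2]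
        have hlam₁ : lam w₁ = 1 := by
          have h1 : kC g₀ w₁ = b := by
            rw [hw₁eq, map_add, kC_tmul, kC_tmul, hg₀c, hg₀γ₁, one_smul, zero_smul, add_zero]
          rw [hlam_def, LinearMap.comp_apply, h1, hbs]
        have hlamcorner : lam (b ⊗ₜ[k] c) = 0 := by
          rw [hlam_def, LinearMap.comp_apply, kC_tmul, hg₀c, zero_smul, map_zero]
        classical
        set bW : Basis (Fin (finrank k ↥W'')) k ↥W'' := Module.finBasis k ↥W'' with hbW
        choose γs βs hdecs using fun j => hdec ((bW j : B'' ⊗[k] C'')) (bW j).2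
        set Q := Submodule.span k {b} with hQ
        set D : (Fin (finrank k ↥W'') → k) →ₗ[k] (B'' ⧸ Q) :=
          Fintype.linearCombination k (fun j => Q.mkQ (βs j)) with hD
        set L : (Fin (finrank k ↥W'') → k) →ₗ[k] k :=
          Fintype.linearCombination k (fun j => lam ((bW j : B'' ⊗[k] C''))) with hL
        have hkerD : LinearMap.ker D ≤ LinearMap.ker L := by
          intro a ha
          rw [LinearMap.mem_ker, hD, Fintype.linearCombination_apply] at ha
          rw [LinearMap.mem_ker, hL, Fintype.linearCombination_apply]
          have ha' : Q.mkQ (∑ j, a j • βs j) = 0 := by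
            rw [map_sum]
            simpa [map_smul] using ha
          rw [Submodule.mkQ_apply, Submodule.Quotient.mk_eq_zero] at ha'
          obtain ⟨t, ht⟩ := Submodule.mem_span_singleton.mp ha'
          have hwW : (∑ j, a j • ((bW j : B'' ⊗[k] C''))) ∈ W'' :=
            Submodule.sum_mem _ (fun j _ => Submodule.smul_mem _ _ (bW j).2)
          have hwdec : (∑ j, a j • ((bW j : B'' ⊗[k] C'')))
              = b ⊗ₜ[k] ((∑ j, a j • γs j) + t • c) := by
            calc ∑ j, a j • ((bW j : B'' ⊗[k] C''))
                = ∑ j, (a j • (b ⊗ₜ[k] γs j) + a j • (βs j ⊗ₜ[k] c)) := by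
                  refine Finset.sum_congr rfl fun j _ => ?_
                  rw [hdecs j, smul_add]
              _ = (∑ j, a j • (b ⊗ₜ[k] γs j)) + (∑ j, a j • (βs j ⊗ₜ[k] c)) :=
                  Finset.sum_add_distrib
              _ = b ⊗ₜ[k] (∑ j, a j • γs j) + (∑ j, a j • βs j) ⊗ₜ[k] c := by
                  have e1 : (∑ j, a j • (b ⊗ₜ[k] γs j)) = b ⊗ₜ[k] (∑ j, a j • γs j) := by
                    rw [TensorProduct.tmul_sum]
                    exact Finset.sum_congr rfl fun j _ => (TensorProduct.tmul_smul _ _ _).symm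
                  have e2 : (∑ j, a j • (βs j ⊗ₜ[k] c)) = (∑ j, a j • βs j) ⊗ₜ[k] c := by
                    rw [TensorProduct.sum_tmul]
                    exact Finset.sum_congr rfl fun j _ => TensorProduct.smul_tmul' _ _ _
                  rw [e1, e2]
              _ = b ⊗ₜ[k] (∑ j, a j • γs j) + b ⊗ₜ[k] (t • c) := by
                  rw [← ht, TensorProduct.smul_tmul]
              _ = b ⊗ₜ[k] ((∑ j, a j • γs j) + t • c) := (TensorProduct.tmul_add _ _ _).symm
          have hspan := hH2 _ hwW ⟨_, hwdec⟩
          obtain ⟨s, hs⟩ := Submodule.mem_span_singleton.mp hspan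
          have hlamw : lam (∑ j, a j • ((bW j : B'' ⊗[k] C''))) = 0 := by
            rw [← hs, map_smul, hlamcorner, smul_zero]
          rw [map_sum] at hlamw
          calc (∑ j, a j • lam ((bW j : B'' ⊗[k] C'')))
              = ∑ j, lam (a j • ((bW j : B'' ⊗[k] C''))) := by
                refine Finset.sum_congr rfl fun j _ => ?_
                rw [map_smul, smul_eq_mul]
            _ = 0 := hlamw
        obtain ⟨g, hg⟩ := exists_factor D L hkerD
        set f₀ : B'' →ₗ[k] k := g ∘ₗ Q.mkQ with hf₀
        have hf₀b : f₀ b = 0 := by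
          rw [hf₀, LinearMap.comp_apply, Submodule.mkQ_apply]
          have hz : Submodule.Quotient.mk b = (0 : B'' ⧸ Q) :=
            (Submodule.Quotient.mk_eq_zero _).mpr (Submodule.mem_span_singleton_self b)
          rw [hz, map_zero]
        have hf₀βs : ∀ j, f₀ (βs j) = lam ((bW j : B'' ⊗[k] C'')) := by
          intro j
          have h1 : Q.mkQ (βs j) = D (Pi.single j 1) := by
            rw [hD, Fintype.linearCombination_apply_single, one_smul]
          rw [hf₀, LinearMap.comp_apply, h1, hg, hL, Fintype.linearCombination_apply_single,
            one_smul]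
        have hf₀key : ∀ w ∈ W'', kB f₀ w = lam w • c := by
          have hFG : (kB f₀) ∘ₗ W''.subtype = ((lam ∘ₗ W''.subtype).smulRight c) := by
            refine bW.ext fun j => ?_
            simp only [LinearMap.comp_apply, Submodule.coe_subtype, LinearMap.smulRight_apply]
            rw [hdecs j, map_add, kB_tmul, kB_tmul, hf₀b, zero_smul, zero_add, hf₀βs j,
              ← hdecs j]
          intro w hw
          have := LinearMap.congr_fun hFG ⟨w, hw⟩
          simpa using this
        have hw₁kB : kB f₀ w₁ = c := by rw [hf₀key w₁ hw₁W, hlam₁, one_smul]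
        have hw₁kC : kC g₀ w₁ = b := by rw [hkC_shape w₁ hw₁W, hlam₁, one_smul]
        have hW₂le : W'' ⊓ LinearMap.ker (kB f₀) ⊓ LinearMap.ker (kC g₀) ≤ W'' :=
          le_trans inf_le_left inf_le_left
        refine step_schemaD W' W''
          (W'' ⊓ LinearMap.ker (kB f₀) ⊓ LinearMap.ker (kC g₀)) f₀ g₀ rfl ?_
          (ih (W'' ⊓ LinearMap.ker (kB f₀) ⊓ LinearMap.ker (kC g₀)) b c hb hc
            (fun w hw => hdec w (hW₂le hw)) ?_ W') ?_ ?_ ?_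
        · -- sRank W'' ≤ sRank W₂ + 2
          have hcov : W'' ≤ ((W'' ⊓ LinearMap.ker (kB f₀) ⊓ LinearMap.ker (kC g₀)) ⊔
              Submodule.span k {b ⊗ₜ[k] γ₁}) ⊔ Submodule.span k {β₁ ⊗ₜ[k] c} := by
            intro w hw
            have humem : w - lam w • w₁ ∈
                W'' ⊓ LinearMap.ker (kB f₀) ⊓ LinearMap.ker (kC g₀) := by
              refine Submodule.mem_inf.mpr ⟨Submodule.mem_inf.mpr ⟨?_, ?_⟩, ?_⟩
              · exact sub_mem hw (Submodule.smul_mem _ _ hw₁W)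
              · rw [LinearMap.mem_ker, map_sub, map_smul, hf₀key w hw, hw₁kB, sub_self]
              · rw [LinearMap.mem_ker, map_sub, map_smul, hkC_shape w hw, hw₁kC, sub_self]
            have hwe : w = (w - lam w • w₁) +
                (lam w • (b ⊗ₜ[k] γ₁) + lam w • (β₁ ⊗ₜ[k] c)) := by
              rw [← smul_add, ← hw₁eq, sub_add_cancel]
            rw [hwe]
            refine Submodule.add_mem _
              (Submodule.mem_sup_left (Submodule.mem_sup_left humem))
              (Submodule.add_mem _
                (Submodule.mem_sup_left (Submodule.mem_sup_right
                  (Submodule.smul_mem _ _ (Submodule.mem_span_singleton_self _))))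
                (Submodule.mem_sup_right
                  (Submodule.smul_mem _ _ (Submodule.mem_span_singleton_self _))))
          have h1 := sRank_mono hcov
          have h2 := sRank_sup_single_le ((W'' ⊓ LinearMap.ker (kB f₀) ⊓ LinearMap.ker (kC g₀)) ⊔
            Submodule.span k {b ⊗ₜ[k] γ₁}) β₁ c
          have h3 := sRank_sup_single_le (W'' ⊓ LinearMap.ker (kB f₀) ⊓ LinearMap.ker (kC g₀)) b γ₁
          omega
        · -- finrank bound
          have hlt : W'' ⊓ LinearMap.ker (kB f₀) ⊓ LinearMap.ker (kC g₀) < W'' := by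
            refine lt_of_le_of_ne hW₂le ?_
            intro heq
            have hmem : w₁ ∈ W'' ⊓ LinearMap.ker (kB f₀) ⊓ LinearMap.ker (kC g₀) :=
              heq.symm ▸ hw₁W
            have h2 := LinearMap.mem_ker.mp (Submodule.mem_inf.mp hmem).2
            rw [hw₁kC] at h2
            exact hb h2
          have := Submodule.finrank_lt_finrank_of_lt hlt
          omega
        · -- hne_f
          intro hle
          have h1 := hle (Submodule.mem_sup_right (Submodule.mem_map_of_mem hw₁W))
          rw [LinearMap.mem_ker, kB_incl2R_apply, hw₁kB] at h1
          exact hc (by simpa [Prod.ext_iff] using h1)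
        · -- hne_g
          intro hle
          have h1 := hle (Submodule.mem_sup_right (Submodule.mem_map_of_mem hw₁W))
          rw [LinearMap.mem_ker, kC_incl2R_apply, hw₁kC] at h1
          exact hb (by simpa [Prod.ext_iff] using h1)
        · -- hfail
          intro v hv
          have hmem : LinearMap.inr k B' B'' b ∈ Submodule.span k {v} := by
            refine hv ⟨incl2R k B' B'' C' C'' w₁,
              Submodule.mem_sup_right (Submodule.mem_map_of_mem hw₁W), ?_⟩
            rw [kC_incl2R_apply, hw₁kC]
          obtain ⟨s, hs⟩ := Submodule.mem_span_singleton.mp hmem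
          have hs0 : s ≠ 0 := by
            intro h
            rw [h, zero_smul] at hs
            have hb0 : b = 0 := by simpa [Prod.ext_iff] using hs.symm
            exact hb hb0
          have h2 : s • (f₀ ∘ₗ LinearMap.snd k B' B'') v = 0 := by
            have h3 := congrArg (f₀ ∘ₗ LinearMap.snd k B' B'') hs
            rw [map_smul] at h3
            rw [h3]
            simp [hf₀b]
          rcases smul_eq_zero.mp h2 with h | h
          · exact absurd h hs0
          · exact h

end Main

end RankAdd

/-- Over an arbitrary field, if `W'' ⊆ B''⊗C''` is `(1,1)`-hook shaped
and `W' ⊆ B'⊗C'` is arbitrary, then the additivity of the rank holds: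
`R(W'⊕W'') = R(W') + R(W'')`. -/
theorem rank_additivity_of_one_one_hook
    [FiniteDimensional k B'] [FiniteDimensional k B''] [FiniteDimensional k C']
    [FiniteDimensional k C'']
    (W' : Submodule k (B' ⊗[k] C')) (W'' : Submodule k (B'' ⊗[k] C''))
    (hhook : IsHookShaped k 1 1 W'') :
    sRank k (Submodule.map (incl2L k B' B'' C' C'') W' ⊔
        Submodule.map (incl2R k B' B'' C' C'') W'')
      = sRank k W' + sRank k W'' := by
  classical
  obtain ⟨b, c, hb, hc, hdec⟩ := RankAdd.hook_decomp hhook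
  refine le_antisymm ?_ ?_
  · refine (RankAdd.sRank_sup_le _ _).trans ?_
    have h1 : sRank k (Submodule.map (incl2L k B' B'' C' C'') W') ≤ sRank k W' :=
      RankAdd.sRank_map_le (LinearMap.inl k B' B'') (LinearMap.inl k C' C'') W'
    have h2 : sRank k (Submodule.map (incl2R k B' B'' C' C'') W'') ≤ sRank k W'' :=
      RankAdd.sRank_map_le (LinearMap.inr k B' B'') (LinearMap.inr k C' C'') W''
    omega
  · exact RankAdd.main_aux (Module.finrank k ↥W'') W'' b c hb hc hdec le_rfl W'
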